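/- arXiv:1308.0462 — 3 statements merged into one kernel-verified Lean document; each statement's English description precedes it below -/
import Mathlib

section
/- With G, g, A as above, for any odd elements η', η'' ∈ A₁ and Y', Y'' ∈ g₁, the following identity holds in the group G(A): (1 + η'Y')·(1 + η''Y'') = (1 + η''η'[Y',Y''])·(1 + η''Y'')·(1 + η'Y'), where [Y',Y''] ∈ g₀ and η''η' ∈ A₀ with (η''η')² = 0. -/
open scoped TensorProduct

/-- A commutative superalgebra over a commutative ring `k`. -/
class SuperAlgebra (k A : Type*) [CommRing k] [Ring A] [Algebra k A] where
  grading : ZMod 2 → Submodule k A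
  one_mem : (1 : A) ∈ grading 0
  mul_mem : ∀ {i j : ZMod 2} {x y : A}, x ∈ grading i → y ∈ grading j → x * y ∈ grading (i + j)
  isInternal : DirectSum.IsInternal grading
  supercomm : ∀ {i j : ZMod 2} {x y : A}, x ∈ grading i → y ∈ grading j →
    x * y = ((-1 : ℤ) ^ (i.val * j.val)) • (y * x)
  odd_sq : ∀ {z : A}, z ∈ grading 1 → z * z = 0

/-- The convolution product on linear maps from a coalgebra `H` to an algebra `A` :
`f ⋆ g := m_A ∘ (f ⊗ g) ∘ Δ`.  For `H = O(G)` this is the group law of `G(A)`. -/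
noncomputable def conv {k : Type*} [CommRing k] {H : Type*} [AddCommGroup H] [Module k H]
    [Coalgebra k H] {A : Type*} [Ring A] [Algebra k A] (f g : H →ₗ[k] A) : H →ₗ[k] A :=
  LinearMap.mul' k A ∘ₗ TensorProduct.map f g ∘ₗ Coalgebra.comul (R := k)

/-- The element `(1 + aY)` of `Hom(O(G), A)` attached to a coefficient `a ∈ A` and a
functional `Y : O(G) → k` (e.g. a tangent vector `Y ∈ g` paired with `O(G)`) :
`f ↦ ε(f)·1_A + a·Y(f)`. -/
noncomputable def oneAdd {k : Type*} [CommRing k] {H : Type*} [AddCommGroup H] [Module k H]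
    [Coalgebra k H] {A : Type*} [Ring A] [Algebra k A] (a : A) (Y : H →ₗ[k] k) : H →ₗ[k] A :=
  Algebra.linearMap k A ∘ₗ Coalgebra.counit (R := k)
    + LinearMap.mulLeft k a ∘ₗ Algebra.linearMap k A ∘ₗ Y

/-- A `k`-valued `ε`-derivation of `H` (a tangent vector at the identity). -/
def IsEpsDeriv {k : Type*} [CommRing k] {H : Type*} [Ring H] [Algebra k H] [Coalgebra k H]
    (Y : H →ₗ[k] k) : Prop :=
  ∀ f g : H, Y (f * g) = Y f * Coalgebra.counit (R := k) g + Coalgebra.counit (R := k) f * Y g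



section Statement7Aux

variable {k : Type*} [CommRing k] {H : Type*} [AddCommGroup H] [Module k H]
  [Coalgebra k H] {A : Type*} [Ring A] [Algebra k A]

/-- The unit of the convolution algebra. -/
noncomputable def convUnit : H →ₗ[k] A := Algebra.linearMap k A ∘ₗ Coalgebra.counit (R := k)

/-- The "nilpotent part" `a·Y` of `oneAdd a Y`. -/
noncomputable def iotaMap (a : A) (Y : H →ₗ[k] k) : H →ₗ[k] A :=
  LinearMap.mulLeft k a ∘ₗ Algebra.linearMap k A ∘ₗ Y

lemma oneAdd_eq (a : A) (Y : H →ₗ[k] k) : oneAdd a Y = convUnit + iotaMap a Y := rfl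

lemma conv_add_left (f g h : H →ₗ[k] A) : conv (f + g) h = conv f h + conv g h := by
  simp [conv, TensorProduct.map_add_left, LinearMap.add_comp, LinearMap.comp_add]

lemma conv_add_right (f g h : H →ₗ[k] A) : conv f (g + h) = conv f g + conv f h := by
  simp [conv, TensorProduct.map_add_right, LinearMap.add_comp, LinearMap.comp_add]

lemma conv_unit_left (f : H →ₗ[k] A) : conv convUnit f = f := by
  ext h
  have h1 : TensorProduct.map (Algebra.linearMap k A ∘ₗ Coalgebra.counit (R := k)) f
      = TensorProduct.map (Algebra.linearMap k A) f ∘ₗ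
        (Coalgebra.counit (R := k) (A := H)).rTensor H := by
    apply TensorProduct.ext'
    intro x y
    simp [LinearMap.rTensor_tmul]
  simp only [conv, convUnit, LinearMap.comp_apply, h1]
  rw [Coalgebra.rTensor_counit_comul]
  simp

lemma conv_unit_right (f : H →ₗ[k] A) : conv f convUnit = f := by
  ext h
  have h1 : TensorProduct.map f (Algebra.linearMap k A ∘ₗ Coalgebra.counit (R := k))
      = TensorProduct.map f (Algebra.linearMap k A) ∘ₗ
        (Coalgebra.counit (R := k) (A := H)).lTensor H := by
    apply TensorProduct.ext'
    intro x y
    simp [LinearMap.lTensor_tmul]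
  simp only [conv, convUnit, LinearMap.comp_apply, h1]
  rw [Coalgebra.lTensor_counit_comul]
  simp

lemma conv_iota_iota (a b : A) (Y Z : H →ₗ[k] k) :
    conv (iotaMap a Y) (iotaMap b Z) = iotaMap (a * b) (conv Y Z) := by
  have key : LinearMap.mul' k A ∘ₗ
      TensorProduct.map (LinearMap.mulLeft k a ∘ₗ Algebra.linearMap k A)
        (LinearMap.mulLeft k b ∘ₗ Algebra.linearMap k A)
      = (LinearMap.mulLeft k (a * b) ∘ₗ Algebra.linearMap k A) ∘ₗ LinearMap.mul' k k := by
    apply TensorProduct.ext'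
    intro x y
    simp only [LinearMap.comp_apply, TensorProduct.map_tmul, LinearMap.mul'_apply,
      LinearMap.mulLeft_apply, Algebra.linearMap_apply, map_mul]
    rw [mul_assoc a, ← mul_assoc (algebraMap k A x) b, Algebra.commutes, mul_assoc b,
      ← mul_assoc a b]
  have h2 := TensorProduct.map_comp (f₂ := LinearMap.mulLeft k a ∘ₗ Algebra.linearMap k A) (f₁ := Y)
    (g₂ := LinearMap.mulLeft k b ∘ₗ Algebra.linearMap k A) (g₁ := Z)
  rw [conv]
  simp only [iotaMap, ← LinearMap.comp_assoc]
  rw [h2, ← LinearMap.comp_assoc, key]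
  simp only [conv, LinearMap.comp_assoc]

lemma iotaMap_zero (Y : H →ₗ[k] k) : iotaMap (0 : A) Y = 0 := by
  ext h; simp [iotaMap]

lemma iotaMap_apply (a : A) (Y : H →ₗ[k] k) (h : H) :
    iotaMap a Y h = a * algebraMap k A (Y h) := rfl

end Statement7Aux

/-- With `G` an affine `k`-supergroup (`H = O(G)` a super bialgebra,
`G(A) ⊆ Hom_k(H, A)` with convolution product), `g` its Lie superalgebra and `A` a
commutative `k`-superalgebra : for odd elements `η', η'' ∈ A₁` and odd tangent vectors
`Y', Y'' ∈ g₁` (odd `ε`-derivations `H → k`), with `[Y', Y'']` their (even) Lie bracket —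
dually `[Y',Y''] = −(Y' ⋆ Y'' + Y'' ⋆ Y')` — the following identity holds in `G(A)` :
`(1 + η'Y')·(1 + η''Y'') = (1 + η''η'[Y',Y''])·(1 + η''Y'')·(1 + η'Y')`,
where `η''η' ∈ A₀` and `(η''η')² = 0`. -/
theorem statement7 {k H A : Type*} [CommRing k] [Ring H] [Bialgebra k H] [SuperAlgebra k H]
    [Ring A] [Algebra k A] [SuperAlgebra k A]
    (η' η'' : A) (hη' : η' ∈ SuperAlgebra.grading (k := k) (A := A) 1)
    (hη'' : η'' ∈ SuperAlgebra.grading (k := k) (A := A) 1)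
    (Y' Y'' B : H →ₗ[k] k)
    (hY' : IsEpsDeriv Y') (hY'' : IsEpsDeriv Y'')
    (hY'odd : ∀ f ∈ SuperAlgebra.grading (k := k) (A := H) 0, Y' f = 0)
    (hY''odd : ∀ f ∈ SuperAlgebra.grading (k := k) (A := H) 0, Y'' f = 0)
    (hB : B = -(conv (A := k) Y' Y'' + conv (A := k) Y'' Y')) :
    conv (oneAdd η' Y') (oneAdd η'' Y'')
      = conv (oneAdd (η'' * η') B) (conv (oneAdd η'' Y'') (oneAdd η' Y')) ∧
    η'' * η' ∈ SuperAlgebra.grading (k := k) (A := A) 0 ∧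
    (η'' * η') * (η'' * η') = 0 := by
  have hcomm : η' * η'' = -(η'' * η') := by
    have h := SuperAlgebra.supercomm (k := k) hη' hη''
    have e : ((1 : ZMod 2)).val = 1 := rfl
    simpa [e] using h
  have hsq' : η' * η' = 0 := SuperAlgebra.odd_sq (k := k) hη'
  have hsq'' : η'' * η'' = 0 := SuperAlgebra.odd_sq (k := k) hη''
  have hc0 : (η'' * η') * η'' = 0 := by
    rw [mul_assoc, hcomm, mul_neg, ← mul_assoc, hsq'', zero_mul, neg_zero]
  have hc1 : (η'' * η') * η' = 0 := by
    rw [mul_assoc, hsq', mul_zero]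
  have haux : η' * (η'' * η') = 0 := by
    rw [← mul_assoc, hcomm, neg_mul, mul_assoc, hsq', mul_zero, neg_zero]
  have hcc : (η'' * η') * (η'' * η') = 0 := by
    rw [mul_assoc, haux, mul_zero]
  have hmem : η'' * η' ∈ SuperAlgebra.grading (k := k) (A := A) 0 := by
    have h := SuperAlgebra.mul_mem (k := k) hη'' hη'
    have e : ((1 : ZMod 2) + 1) = 0 := by decide
    rwa [e] at h
  refine ⟨?_, hmem, hcc⟩
  have final : iotaMap (η' * η'') (conv Y' Y'')
      = iotaMap (η'' * η') (conv Y'' Y') + iotaMap (η'' * η') B := by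
    ext h
    simp only [LinearMap.add_apply, iotaMap_apply, hB, LinearMap.neg_apply, map_neg,
      map_add, hcomm]
    noncomm_ring
  simp only [oneAdd_eq, conv_add_left, conv_add_right, conv_unit_left, conv_unit_right,
    conv_iota_iota, hc0, hc1, hcc, iotaMap_zero, add_zero, zero_add]
  rw [final]
  abel
end

section
/- For a block matrix g = (a β; γ d) with a, d square blocks over A₀ and β, γ blocks over A₁ (A a commutative superalgebra), g is invertible in the algebra of such block matrices if and only if a and d are invertible matrices over A₀. -/
/-- The parity of a block index : indices in `Fin p` are even, those in `Fin q` odd. -/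
def blockParity (p q : ℕ) : Fin p ⊕ Fin q → ZMod 2 :=
  Sum.elim (fun _ => 0) (fun _ => 1)

namespace Statement15Aux

variable {k A : Type*} [CommRing k] [Ring A] [Algebra k A] [SuperAlgebra k A]

local notation "G" => SuperAlgebra.grading (k := k) (A := A)

lemma even_comm {x y : A} {i : ZMod 2} (hx : x ∈ G 0) (hy : y ∈ G i) :
    x * y = y * x := by
  have h := SuperAlgebra.supercomm hx hy
  simpa using h

lemma odd_anticomm {x y : A} (hx : x ∈ G 1) (hy : y ∈ G 1) :
    x * y = -(y * x) := by
  have h := SuperAlgebra.supercomm hx hy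
  simpa [show ZMod.val (1 : ZMod 2) = 1 from rfl] using h

lemma mem_mul_00 {x y : A} (hx : x ∈ G 0) (hy : y ∈ G 0) : x * y ∈ G 0 := by
  simpa using SuperAlgebra.mul_mem hx hy

lemma mem_mul_01 {x y : A} (hx : x ∈ G 0) (hy : y ∈ G 1) : x * y ∈ G 1 := by
  simpa using SuperAlgebra.mul_mem hx hy

lemma mem_mul_10 {x y : A} (hx : x ∈ G 1) (hy : y ∈ G 0) : x * y ∈ G 1 := by
  simpa using SuperAlgebra.mul_mem hx hy

lemma mem_mul_11 {x y : A} (hx : x ∈ G 1) (hy : y ∈ G 1) : x * y ∈ G 0 := by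
  have h := SuperAlgebra.mul_mem hx hy
  rwa [show ((1 : ZMod 2) + 1) = 0 by decide] at h

variable (k A) in
/-- The even part as a subalgebra. -/
def evenSub : Subalgebra k A :=
  (SuperAlgebra.grading (k := k) (A := A) 0).toSubalgebra SuperAlgebra.one_mem
    (fun _ _ hx hy => mem_mul_00 hx hy)

lemma mem_evenSub {x : A} : x ∈ evenSub k A ↔ x ∈ G 0 := Iff.rfl

instance : CommRing (evenSub k A) :=
  { (inferInstance : Ring (evenSub k A)) with
    mul_comm := fun x y => Subtype.ext (even_comm (i := 0) x.2 y.2) }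

variable (k A) in
/-- Inclusion of the even part. -/
def φA : evenSub k A →+* A := ((evenSub k A).val).toRingHom

@[simp] lemma φA_apply (x : evenSub k A) : φA k A x = (x : A) := rfl

section Mat

variable {n : Type*} [Fintype n] [DecidableEq n]

lemma pow_entry_mem {R : Type*} [CommRing R] (I : Ideal R)
    (M : Matrix n n R) (h : ∀ i j, M i j ∈ I) :
    ∀ (κ : ℕ) (i j : n), (M ^ κ) i j ∈ I ^ κ := by
  intro κ
  induction κ with
  | zero =>
      intro i j
      rw [pow_zero, pow_zero, Ideal.one_eq_top]
      exact Submodule.mem_top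
  | succ κ ih =>
      intro i j
      rw [pow_succ M, Matrix.mul_apply, pow_succ I]
      exact Ideal.sum_mem _ fun l _ => Ideal.mul_mem_mul (ih i l) (h l j)

lemma isNilpotent_of_entries {R : Type*} [CommRing R] {I : Ideal R} (hI : IsNilpotent I)
    (M : Matrix n n R) (h : ∀ i j, M i j ∈ I) : IsNilpotent M := by
  obtain ⟨κ, hκ⟩ := hI
  refine ⟨κ, Matrix.ext fun i j => ?_⟩
  have hm := pow_entry_mem I M h κ i j
  rw [hκ] at hm
  simpa using Ideal.mem_bot.mp (by simpa using hm)

lemma entry_mul_left_mem {R : Type*} [CommRing R] {I : Ideal R} {m : Type*} {n' : Type*}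
    [Fintype n'] (P : Matrix m n' R) (N : Matrix n' n R) (hN : ∀ i j, N i j ∈ I) :
    ∀ i j, (P * N) i j ∈ I := fun i j => by
  rw [Matrix.mul_apply]
  exact Ideal.sum_mem _ fun l _ => Ideal.mul_mem_left _ _ (hN l j)

lemma isUnit_sub_of_entries {R : Type*} [CommRing R] {I : Ideal R} (hI : IsNilpotent I)
    {M N : Matrix n n R} (hM : IsUnit M) (hN : ∀ i j, N i j ∈ I) : IsUnit (M - N) := by
  obtain ⟨u, rfl⟩ := hM
  have h1 : IsUnit (1 - ((↑u⁻¹ : Matrix n n R) * N)) :=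
    (isNilpotent_of_entries hI _ (entry_mul_left_mem _ _ hN)).isUnit_one_sub
  have h2 : (↑u : Matrix n n R) * (1 - (↑u⁻¹ : Matrix n n R) * N) = ↑u - N := by
    rw [mul_sub, mul_one, ← mul_assoc, Units.mul_inv, one_mul]
  exact h2 ▸ u.isUnit.mul h1

end Mat

section OddIdeal

variable {ι : Type*} [Fintype ι]

variable (k) in
def oddIdeal (θ : ι → A) (hθ : ∀ t, θ t ∈ G 1) : Ideal (evenSub k A) :=
  Ideal.span (Set.range fun st : ι × ι =>
    (⟨θ st.1 * θ st.2, mem_mul_11 (hθ st.1) (hθ st.2)⟩ : evenSub k A))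

lemma mem_oddIdeal_of_eq (θ : ι → A) (hθ : ∀ t, θ t ∈ G 1) (x : evenSub k A) (s t : ι)
    (hx : (x : A) = θ s * θ t) : x ∈ oddIdeal k θ hθ :=
  Ideal.subset_span ⟨(s, t), Subtype.ext hx.symm⟩

lemma oddIdeal_isNilpotent (θ : ι → A) (hθ : ∀ t, θ t ∈ G 1) :
    IsNilpotent (oddIdeal k θ hθ) := by
  have hle : oddIdeal k θ hθ ≤ Ideal.radical (⊥ : Ideal (evenSub k A)) := by
    rw [oddIdeal, Ideal.span_le]
    rintro x ⟨⟨s, t⟩, rfl⟩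
    have h1 : θ t * θ t = 0 := SuperAlgebra.odd_sq (hθ t)
    have hts : θ t * θ s = -(θ s * θ t) := odd_anticomm (hθ t) (hθ s)
    have hz : θ t * (θ s * θ t) = 0 := by
      rw [← mul_assoc, hts, neg_mul, mul_assoc, h1, mul_zero, neg_zero]
    have hsq : (θ s * θ t) * (θ s * θ t) = 0 := by
      rw [mul_assoc, hz, mul_zero]
    refine Ideal.mem_radical_iff.mpr ⟨2, Ideal.mem_bot.mpr ?_⟩
    exact Subtype.ext (by rw [pow_two]; simpa using hsq)
  obtain ⟨κ, hκ⟩ := Ideal.exists_pow_le_of_le_radical_of_fg hle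
      (Submodule.fg_span (Set.finite_range _))
  exact ⟨κ, le_bot_iff.mp hκ⟩

end OddIdeal

section Lift

variable {n : Type*} [Fintype n] [DecidableEq n]

def liftEv {m n' : Type*} (M : Matrix m n' A) (hM : ∀ i j, M i j ∈ G 0) :
    Matrix m n' (evenSub k A) := Matrix.of fun i j => ⟨M i j, hM i j⟩

lemma mapMatrix_liftEv {m n' : Type*} (M : Matrix m n' A) (hM : ∀ i j, M i j ∈ G 0) :
    (liftEv M hM).map (φA k A) = M := rfl

lemma mapMatrix_injective :
    Function.Injective ((φA k A).mapMatrix : Matrix n n (evenSub k A) →+* Matrix n n A) := by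
  intro M N h
  ext i j
  have h' := congrArg (fun X : Matrix n n A => X i j) h
  simp only [RingHom.mapMatrix_apply, Matrix.map_apply, φA_apply] at h'
  exact h'

lemma isUnit_lift_iff (M : Matrix n n A) (hM : ∀ i j, M i j ∈ G 0) :
    (∃ M' : Matrix n n A, (∀ i j, M' i j ∈ G 0) ∧ M * M' = 1 ∧ M' * M = 1) ↔
      IsUnit (liftEv M hM) := by
  constructor
  · rintro ⟨M', hM', h1, h2⟩
    refine ⟨⟨liftEv M hM, liftEv M' hM', ?_, ?_⟩, rfl⟩ <;>
      apply mapMatrix_injective (k := k) (A := A)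
    · rw [map_mul, map_one]
      simpa only [RingHom.mapMatrix_apply, mapMatrix_liftEv] using h1
    · rw [map_mul, map_one]
      simpa only [RingHom.mapMatrix_apply, mapMatrix_liftEv] using h2
  · rintro ⟨u, hu⟩
    refine ⟨(φA k A).mapMatrix ↑u⁻¹, fun i j => ?_, ?_, ?_⟩
    · exact ((↑u⁻¹ : Matrix n n (evenSub k A)) i j).2
    · have hM' : M = (φA k A).mapMatrix ↑u := by
        rw [hu]; exact (mapMatrix_liftEv M hM).symm
      rw [hM', ← map_mul, Units.mul_inv, map_one]
    · have hM' : M = (φA k A).mapMatrix ↑u := by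
        rw [hu]; exact (mapMatrix_liftEv M hM).symm
      rw [hM', ← map_mul, Units.inv_mul, map_one]

lemma mem_of_coe_eq_sum {σ : Type*} (J : Ideal (evenSub k A)) (s : Finset σ)
    (f : σ → evenSub k A) (x : evenSub k A)
    (hx : (x : A) = ∑ l ∈ s, ((f l : A))) (h : ∀ l ∈ s, f l ∈ J) : x ∈ J := by
  have hx' : x = ∑ l ∈ s, f l := Subtype.ext (by rw [hx]; simp)
  exact hx' ▸ Ideal.sum_mem J h

lemma mul_entry_mem {i j : ZMod 2} {m n' p' : Type*} [Fintype n']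
    (M : Matrix m n' A) (N : Matrix n' p' A)
    (hM : ∀ r c, M r c ∈ G i) (hN : ∀ r c, N r c ∈ G j) :
    ∀ r c, (M * N) r c ∈ G (i + j) := fun r c => by
  rw [Matrix.mul_apply]
  exact Submodule.sum_mem _ fun l _ => SuperAlgebra.mul_mem (hM r l) (hN l c)

end Lift



end Statement15Aux

open Statement15Aux


/-- For a block matrix `g = (a β; γ d)` with `a, d` square blocks over
`A₀` and `β, γ` blocks over `A₁` (`A` a commutative superalgebra), `g` is invertible in
the algebra of such block matrices (i.e. it has a two-sided inverse which is again an even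
block-graded matrix) if and only if `a` and `d` are invertible matrices over `A₀`. -/
theorem statement15 {k A : Type*} [CommRing k] [Ring A] [Algebra k A] [SuperAlgebra k A]
    (p q : ℕ)
    (a : Matrix (Fin p) (Fin p) A) (β : Matrix (Fin p) (Fin q) A)
    (γ : Matrix (Fin q) (Fin p) A) (d : Matrix (Fin q) (Fin q) A)
    (ha : ∀ i j, a i j ∈ SuperAlgebra.grading (k := k) (A := A) 0)
    (hβ : ∀ i j, β i j ∈ SuperAlgebra.grading (k := k) (A := A) 1)
    (hγ : ∀ i j, γ i j ∈ SuperAlgebra.grading (k := k) (A := A) 1)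
    (hd : ∀ i j, d i j ∈ SuperAlgebra.grading (k := k) (A := A) 0) :
    (∃ h : Matrix (Fin p ⊕ Fin q) (Fin p ⊕ Fin q) A,
        (∀ i j, h i j ∈ SuperAlgebra.grading (k := k) (A := A)
          (blockParity p q i + blockParity p q j)) ∧
        Matrix.fromBlocks a β γ d * h = 1 ∧ h * Matrix.fromBlocks a β γ d = 1)
    ↔ ((∃ a' : Matrix (Fin p) (Fin p) A,
          (∀ i j, a' i j ∈ SuperAlgebra.grading (k := k) (A := A) 0) ∧
          a * a' = 1 ∧ a' * a = 1) ∧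
        (∃ d' : Matrix (Fin q) (Fin q) A,
          (∀ i j, d' i j ∈ SuperAlgebra.grading (k := k) (A := A) 0) ∧
          d * d' = 1 ∧ d' * d = 1)) := by
  classical
  have e00 : ((0 : ZMod 2) + 0) = 0 := by decide
  have e01 : ((0 : ZMod 2) + 1) = 1 := by decide
  have e10 : ((1 : ZMod 2) + 0) = 1 := by decide
  have e11 : ((1 : ZMod 2) + 1) = 0 := by decide
  constructor
  · -- forward direction
    rintro ⟨h, hpar, hgh, hhg⟩
    have ha' : ∀ i j, h.toBlocks₁₁ i j ∈ SuperAlgebra.grading (k := k) (A := A) 0 := fun i j => by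
      have := hpar (Sum.inl i) (Sum.inl j)
      rwa [show blockParity p q (Sum.inl i) = 0 from rfl,
        show blockParity p q (Sum.inl j) = 0 from rfl, e00] at this
    have hβ' : ∀ i j, h.toBlocks₁₂ i j ∈ SuperAlgebra.grading (k := k) (A := A) 1 := fun i j => by
      have := hpar (Sum.inl i) (Sum.inr j)
      rwa [show blockParity p q (Sum.inl i) = 0 from rfl,
        show blockParity p q (Sum.inr j) = 1 from rfl, e01] at this
    have hγ' : ∀ i j, h.toBlocks₂₁ i j ∈ SuperAlgebra.grading (k := k) (A := A) 1 := fun i j => by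
      have := hpar (Sum.inr i) (Sum.inl j)
      rwa [show blockParity p q (Sum.inr i) = 1 from rfl,
        show blockParity p q (Sum.inl j) = 0 from rfl, e10] at this
    have hd' : ∀ i j, h.toBlocks₂₂ i j ∈ SuperAlgebra.grading (k := k) (A := A) 0 := fun i j => by
      have := hpar (Sum.inr i) (Sum.inr j)
      rwa [show blockParity p q (Sum.inr i) = 1 from rfl,
        show blockParity p q (Sum.inr j) = 1 from rfl, e11] at this
    set a' := h.toBlocks₁₁
    set β' := h.toBlocks₁₂
    set γ' := h.toBlocks₂₁
    set d' := h.toBlocks₂₂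
    rw [← Matrix.fromBlocks_toBlocks h, Matrix.fromBlocks_multiply,
      ← Matrix.fromBlocks_one, Matrix.fromBlocks_inj] at hgh
    obtain ⟨g11, g12, g21, g22⟩ := hgh
    set ι := ((Fin p × Fin q) ⊕ (Fin q × Fin p)) ⊕ ((Fin p × Fin q) ⊕ (Fin q × Fin p)) with hι
    set θ : ι → A := Sum.elim
        (Sum.elim (fun st => β st.1 st.2) (fun st => γ st.1 st.2))
        (Sum.elim (fun st => β' st.1 st.2) (fun st => γ' st.1 st.2)) with hθdef
    have hθ : ∀ t, θ t ∈ SuperAlgebra.grading (k := k) (A := A) 1 := by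
      rintro ((st | st) | (st | st))
      · exact hβ st.1 st.2
      · exact hγ st.1 st.2
      · exact hβ' st.1 st.2
      · exact hγ' st.1 st.2
    have hJnil := oddIdeal_isNilpotent θ hθ
    constructor
    · -- invertibility of a
      have hBC : ∀ i j, (β * γ') i j ∈ SuperAlgebra.grading (k := k) (A := A) 0 := fun i j => by
        have := mul_entry_mem β γ' hβ hγ' i j
        rwa [e11] at this
      have hJmem : ∀ i j, liftEv (β * γ') hBC i j ∈ oddIdeal k θ hθ := fun i j => by
        refine mem_of_coe_eq_sum _ Finset.univ
          (fun l => ⟨β i l * γ' l j, mem_mul_11 (hβ i l) (hγ' l j)⟩) _ ?_ ?_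
        · exact Matrix.mul_apply
        · intro l _
          exact mem_oddIdeal_of_eq θ hθ _ (Sum.inl (Sum.inl (i, l)))
            (Sum.inr (Sum.inr (l, j))) rfl
      have key : liftEv a ha * liftEv a' ha' = 1 - liftEv (β * γ') hBC := by
        have e11' : a * a' = 1 - β * γ' := eq_sub_of_add_eq g11
        apply mapMatrix_injective (k := k) (A := A)
        rw [map_mul, map_sub, map_one, RingHom.mapMatrix_apply, RingHom.mapMatrix_apply,
          RingHom.mapMatrix_apply, mapMatrix_liftEv, mapMatrix_liftEv, mapMatrix_liftEv, e11']
      obtain ⟨u0, hu0⟩ := (isNilpotent_of_entries hJnil _ hJmem).isUnit_one_sub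
      have hone : liftEv a ha * (liftEv a' ha' *
          ((↑u0⁻¹ : Matrix (Fin p) (Fin p) (evenSub k A)))) = 1 := by
        rw [← mul_assoc, key, ← hu0, Units.mul_inv]
      exact (isUnit_lift_iff a ha).2 ((Matrix.isUnit_iff_isUnit_det _).2 (Matrix.isUnit_det_of_right_inverse hone))
    · -- invertibility of d
      have hBC : ∀ i j, (γ * β') i j ∈ SuperAlgebra.grading (k := k) (A := A) 0 := fun i j => by
        have := mul_entry_mem γ β' hγ hβ' i j
        rwa [e11] at this
      have hJmem : ∀ i j, liftEv (γ * β') hBC i j ∈ oddIdeal k θ hθ := fun i j => by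
        refine mem_of_coe_eq_sum _ Finset.univ
          (fun l => ⟨γ i l * β' l j, mem_mul_11 (hγ i l) (hβ' l j)⟩) _ ?_ ?_
        · exact Matrix.mul_apply
        · intro l _
          exact mem_oddIdeal_of_eq θ hθ _ (Sum.inl (Sum.inr (i, l)))
            (Sum.inr (Sum.inl (l, j))) rfl
      have key : liftEv d hd * liftEv d' hd' = 1 - liftEv (γ * β') hBC := by
        have e22' : d * d' = 1 - γ * β' := eq_sub_of_add_eq' g22
        apply mapMatrix_injective (k := k) (A := A)
        rw [map_mul, map_sub, map_one, RingHom.mapMatrix_apply, RingHom.mapMatrix_apply,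
          RingHom.mapMatrix_apply, mapMatrix_liftEv, mapMatrix_liftEv, mapMatrix_liftEv, e22']
      obtain ⟨u0, hu0⟩ := (isNilpotent_of_entries hJnil _ hJmem).isUnit_one_sub
      have hone : liftEv d hd * (liftEv d' hd' *
          ((↑u0⁻¹ : Matrix (Fin q) (Fin q) (evenSub k A)))) = 1 := by
        rw [← mul_assoc, key, ← hu0, Units.mul_inv]
      exact (isUnit_lift_iff d hd).2 ((Matrix.isUnit_iff_isUnit_det _).2 (Matrix.isUnit_det_of_right_inverse hone))
  · -- reverse direction
    rintro ⟨⟨a', ha', haa', ha'a⟩, ⟨d', hd', hdd', hd'd⟩⟩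
    set ι := (Fin p × Fin q) ⊕ (Fin q × Fin p) with hι
    set θ : ι → A := Sum.elim (fun st => β st.1 st.2) (fun st => γ st.1 st.2) with hθdef
    have hθ : ∀ t, θ t ∈ SuperAlgebra.grading (k := k) (A := A) 1 := by
      rintro (st | st)
      · exact hβ st.1 st.2
      · exact hγ st.1 st.2
    have hJnil := oddIdeal_isNilpotent θ hθ
    set u := β * d' with hudef
    set v := d' * γ with hvdef
    set m := u * γ with hmdef
    have hu1 : ∀ i j, u i j ∈ SuperAlgebra.grading (k := k) (A := A) 1 := fun i j => by
      have := mul_entry_mem β d' hβ hd' i j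
      rw [← hudef] at this
      rwa [e10] at this
    have hv1 : ∀ i j, v i j ∈ SuperAlgebra.grading (k := k) (A := A) 1 := fun i j => by
      have := mul_entry_mem d' γ hd' hγ i j
      rw [← hvdef] at this
      rwa [e01] at this
    have hm0 : ∀ i j, m i j ∈ SuperAlgebra.grading (k := k) (A := A) 0 := fun i j => by
      have := mul_entry_mem u γ hu1 hγ i j
      rw [← hmdef] at this
      rwa [e11] at this
    have hmJ : ∀ i j, liftEv m hm0 i j ∈ oddIdeal k θ hθ := fun i j => by
      refine mem_of_coe_eq_sum _ Finset.univ
        (fun l' => ⟨u i l' * γ l' j, mem_mul_11 (hu1 i l') (hγ l' j)⟩) _ ?_ ?_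
      · show m i j = _
        rw [hmdef]
        exact Matrix.mul_apply
      · intro l' _
        refine mem_of_coe_eq_sum _ Finset.univ
          (fun l => ⟨β i l * (d' l l' * γ l' j),
            mem_mul_11 (hβ i l) (mem_mul_01 (hd' l l') (hγ l' j))⟩) _ ?_ ?_
        · show u i l' * γ l' j = _
          rw [hudef, Matrix.mul_apply, Finset.sum_mul]
          exact Finset.sum_congr rfl fun l _ => mul_assoc _ _ _
        · intro l _
          have hc : β i l * d' l l' = d' l l' * β i l :=
            (even_comm (hd' l l') (hβ i l)).symm
          have hswap : β i l * (d' l l' * γ l' j) = d' l l' * (β i l * γ l' j) := by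
            rw [← mul_assoc, hc, mul_assoc]
          have heq : (⟨β i l * (d' l l' * γ l' j),
              mem_mul_11 (hβ i l) (mem_mul_01 (hd' l l') (hγ l' j))⟩ : evenSub k A) =
              (⟨d' l l', hd' l l'⟩ : evenSub k A) *
                ⟨β i l * γ l' j, mem_mul_11 (hβ i l) (hγ l' j)⟩ :=
            Subtype.ext hswap
          show (⟨β i l * (d' l l' * γ l' j),
              mem_mul_11 (hβ i l) (mem_mul_01 (hd' l l') (hγ l' j))⟩ : evenSub k A) ∈
            oddIdeal k θ hθ
          rw [heq]
          exact Ideal.mul_mem_left _ _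
            (mem_oddIdeal_of_eq θ hθ _ (Sum.inl (i, l)) (Sum.inr (l', j)) rfl)
    have hUa : IsUnit (liftEv a ha) := (isUnit_lift_iff a ha).1 ⟨a', ha', haa', ha'a⟩
    have hsub : ∀ i j, (a - m) i j ∈ SuperAlgebra.grading (k := k) (A := A) 0 := fun i j => by
      rw [Matrix.sub_apply]
      exact sub_mem (ha i j) (hm0 i j)
    have hliftsub : liftEv (a - m) hsub = liftEv a ha - liftEv m hm0 := by
      ext i j
      simp [liftEv, Matrix.sub_apply]
    have hUx : IsUnit (liftEv (a - m) hsub) := by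
      rw [hliftsub]
      exact isUnit_sub_of_entries hJnil hUa hmJ
    obtain ⟨xinv, hxinv0, hx1, hx2⟩ := (isUnit_lift_iff (a - m) hsub).2 hUx
    set x := a - m with hxdef
    have hxu : ∀ i j, (xinv * u) i j ∈ SuperAlgebra.grading (k := k) (A := A) 1 := fun i j => by
      have := mul_entry_mem xinv u hxinv0 hu1 i j
      rwa [e01] at this
    have hvx : ∀ i j, (v * xinv) i j ∈ SuperAlgebra.grading (k := k) (A := A) 1 := fun i j => by
      have := mul_entry_mem v xinv hv1 hxinv0 i j
      rwa [e10] at this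
    have hvxu : ∀ i j, (v * (xinv * u)) i j ∈ SuperAlgebra.grading (k := k) (A := A) 0 :=
      fun i j => by
      have := mul_entry_mem v (xinv * u) hv1 hxu i j
      rwa [e11] at this
    set T₁ := Matrix.fromBlocks (1 : Matrix (Fin p) (Fin p) A) u 0 (1 : Matrix (Fin q) (Fin q) A) with hT₁def
    set T₁' := Matrix.fromBlocks (1 : Matrix (Fin p) (Fin p) A) (-u) 0 (1 : Matrix (Fin q) (Fin q) A) with hT₁'def
    set T₂ := Matrix.fromBlocks (1 : Matrix (Fin p) (Fin p) A) 0 v (1 : Matrix (Fin q) (Fin q) A) with hT₂def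
    set T₂' := Matrix.fromBlocks (1 : Matrix (Fin p) (Fin p) A) 0 (-v) (1 : Matrix (Fin q) (Fin q) A) with hT₂'def
    set D := Matrix.fromBlocks x 0 0 d with hDdef
    set D' := Matrix.fromBlocks xinv 0 0 d' with hD'def
    have hT1 : T₁ * T₁' = 1 := by
      rw [hT₁def, hT₁'def, Matrix.fromBlocks_multiply, ← Matrix.fromBlocks_one]
      congr 1 <;> simp
    have hT1' : T₁' * T₁ = 1 := by
      rw [hT₁def, hT₁'def, Matrix.fromBlocks_multiply, ← Matrix.fromBlocks_one]
      congr 1 <;> simp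
    have hT2 : T₂ * T₂' = 1 := by
      rw [hT₂def, hT₂'def, Matrix.fromBlocks_multiply, ← Matrix.fromBlocks_one]
      congr 1 <;> simp
    have hT2' : T₂' * T₂ = 1 := by
      rw [hT₂def, hT₂'def, Matrix.fromBlocks_multiply, ← Matrix.fromBlocks_one]
      congr 1 <;> simp
    have hD : D * D' = 1 := by
      rw [hDdef, hD'def, Matrix.fromBlocks_multiply, ← Matrix.fromBlocks_one]
      congr 1 <;> simp [hx1, hdd']
    have hD' : D' * D = 1 := by
      rw [hDdef, hD'def, Matrix.fromBlocks_multiply, ← Matrix.fromBlocks_one]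
      congr 1 <;> simp [hx2, hd'd]
    have hdv : d * v = γ := by rw [hvdef, ← Matrix.mul_assoc, hdd', Matrix.one_mul]
    have hud : u * d = β := by rw [hudef, Matrix.mul_assoc, hd'd, Matrix.mul_one]
    have hg : Matrix.fromBlocks a β γ d = T₁ * (D * T₂) := by
      rw [hT₁def, hDdef, hT₂def, Matrix.fromBlocks_multiply, Matrix.fromBlocks_multiply,
        Matrix.fromBlocks_inj]
      refine ⟨?_, ?_, ?_, ?_⟩
      · simp only [Matrix.one_mul, Matrix.mul_one, Matrix.zero_mul, Matrix.mul_zero,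
          add_zero, zero_add]
        rw [hdv, ← hmdef, hxdef]
        abel
      · simp only [Matrix.one_mul, Matrix.mul_one, Matrix.zero_mul, Matrix.mul_zero,
          add_zero, zero_add]
        rw [hud]
      · simp only [Matrix.one_mul, Matrix.mul_one, Matrix.zero_mul, Matrix.mul_zero,
          add_zero, zero_add]
        rw [hdv]
      · simp only [Matrix.one_mul, Matrix.mul_one, Matrix.zero_mul, Matrix.mul_zero,
          add_zero, zero_add]
    have hform : T₂' * (D' * T₁') =
        Matrix.fromBlocks xinv (-(xinv * u)) (-(v * xinv)) (v * (xinv * u) + d') := by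
      rw [hT₂'def, hD'def, hT₁'def, Matrix.fromBlocks_multiply, Matrix.fromBlocks_multiply,
        Matrix.fromBlocks_inj]
      refine ⟨?_, ?_, ?_, ?_⟩ <;> simp
    refine ⟨T₂' * (D' * T₁'), ?_, ?_, ?_⟩
    · intro i j
      rw [hform]
      rcases i with i | i <;> rcases j with j | j
      · rw [show blockParity p q (Sum.inl i) = 0 from rfl,
          show blockParity p q (Sum.inl j) = 0 from rfl, e00]
        simpa using hxinv0 i j
      · rw [show blockParity p q (Sum.inl i) = 0 from rfl,
          show blockParity p q (Sum.inr j) = 1 from rfl, e01]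
        simpa using neg_mem (hxu i j)
      · rw [show blockParity p q (Sum.inr i) = 1 from rfl,
          show blockParity p q (Sum.inl j) = 0 from rfl, e10]
        simpa using neg_mem (hvx i j)
      · rw [show blockParity p q (Sum.inr i) = 1 from rfl,
          show blockParity p q (Sum.inr j) = 1 from rfl, e11]
        simpa using add_mem (hvxu i j) (hd' i j)
    · rw [hg]
      calc T₁ * (D * T₂) * (T₂' * (D' * T₁'))
          = T₁ * (D * (T₂ * (T₂' * (D' * T₁')))) := by simp only [mul_assoc]
        _ = 1 := by
          rw [← mul_assoc T₂ T₂', hT2, one_mul, ← mul_assoc D D', hD, one_mul, hT1]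
    · rw [hg]
      calc T₂' * (D' * T₁') * (T₁ * (D * T₂))
          = T₂' * (D' * (T₁' * (T₁ * (D * T₂)))) := by simp only [mul_assoc]
        _ = 1 := by
          rw [← mul_assoc T₁' T₁, hT1', one_mul, ← mul_assoc D' D, hD', one_mul, hT2']
end

section
/- Let H be a commutative Hopf superalgebra over k that is strongly split, with splitting isomorphism H ≅ H̄ ⊗_k ⋀W (W := H₁/(H₀⁺H₁)) of counital left H̄-comodule algebras. Then for every φ ∈ (⋀W)₁ one has Δ(φ) = φ⊗1 + 1⊗φ + Σ φ⁺₍₁₎ ⊗ φ⁺₍₂₎, where each pair (φ⁺₍₁₎, φ⁺₍₂₎) lies in (H₁^{[2]} × H₁) ∪ (H₁ × H̄⁺) ∪ (H₁ × H₁^{[2]}). -/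
open scoped TensorProduct

variable (k : Type*) [CommRing k] (H : Type*) [Ring H] [Algebra k H] [SuperAlgebra k H]

/-- The ideal `J_H` generated by the odd part `H₁`. -/
def oddIdeal : Submodule H H :=
  Submodule.span H ((SuperAlgebra.grading (k := k) (A := H) 1 : Submodule k H) : Set H)

/-- `H₁^{[2]}` : the span of all products of two odd elements. -/
def oddSquares : Submodule k H :=
  Submodule.span k {a : H | ∃ x ∈ SuperAlgebra.grading (k := k) (A := H) 1,
    ∃ y ∈ SuperAlgebra.grading (k := k) (A := H) 1, a = x * y}

/-- The image `P ⊗ Q` of `↥P ⊗ ↥Q` inside `H ⊗ H`. -/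
noncomputable def pairTensor (P Q : Submodule k H) : Submodule k (H ⊗[k] H) :=
  LinearMap.range (TensorProduct.map P.subtype Q.subtype)

/-- The degree-`i` part of the induced grading on `H ⊗ H`. -/
noncomputable def tensorGrading (i : ZMod 2) : Submodule k (H ⊗[k] H) :=
  ⨆ j : ZMod 2, pairTensor k H (SuperAlgebra.grading (k := k) (A := H) j)
    (SuperAlgebra.grading (k := k) (A := H) (i + j))

section auxiliary

variable {R : Type*} [CommRing R] {A : Type*} [Ring A] [Algebra R A] [SuperAlgebra R A]

/-- The projection onto the degree-`i` component of a superalgebra. -/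
noncomputable def sproj (i : ZMod 2) : A →ₗ[R] A :=
  (SuperAlgebra.grading (k := R) (A := A) i).subtype ∘ₗ
    (DirectSum.component R (ZMod 2) (fun j => SuperAlgebra.grading (k := R) (A := A) j) i) ∘ₗ
    (LinearEquiv.ofBijective (DirectSum.coeLinearMap _) SuperAlgebra.isInternal).symm.toLinearMap

lemma sproj_mem (i : ZMod 2) (x : A) :
    sproj (R := R) i x ∈ SuperAlgebra.grading (k := R) (A := A) i :=
  SetLike.coe_mem _

lemma sproj_of_mem {i : ZMod 2} {x : A} (hx : x ∈ SuperAlgebra.grading (k := R) (A := A) i) :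
    sproj (R := R) i x = x := by
  have := (SuperAlgebra.isInternal (k := R) (A := A)).ofBijective_coeLinearMap_of_mem hx (i := i)
  simp only [sproj, LinearMap.coe_comp, Function.comp_apply, LinearEquiv.coe_coe,
    ← DirectSum.apply_eq_component]
  rw [this]; rfl

lemma sproj_of_mem_ne {i j : ZMod 2} (hij : i ≠ j) {x : A}
    (hx : x ∈ SuperAlgebra.grading (k := R) (A := A) j) : sproj (R := R) i x = 0 := by
  have := (SuperAlgebra.isInternal (k := R) (A := A)).ofBijective_coeLinearMap_of_mem_ne hx
    (hij := Ne.symm hij)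
  simp only [sproj, LinearMap.coe_comp, Function.comp_apply, LinearEquiv.coe_coe,
    ← DirectSum.apply_eq_component]
  rw [this]; simp

lemma zmod2_cases : ∀ i : ZMod 2, i = 0 ∨ i = 1 := by decide

end auxiliary

set_option linter.unusedSectionVars false in
lemma tmul_mem_pairTensor {P Q : Submodule k H} {x y : H} (hx : x ∈ P) (hy : y ∈ Q) :
    x ⊗ₜ[k] y ∈ pairTensor k H P Q :=
  ⟨(⟨x, hx⟩ : P) ⊗ₜ[k] (⟨y, hy⟩ : Q), rfl⟩

set_option linter.unusedSectionVars false in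
lemma pairTensor_sup_right (P Q₁ Q₂ : Submodule k H) :
    pairTensor k H P (Q₁ ⊔ Q₂) ≤ pairTensor k H P Q₁ ⊔ pairTensor k H P Q₂ := by
  rintro z ⟨t, rfl⟩
  induction t using TensorProduct.induction_on with
  | zero => simp only [map_zero]; exact Submodule.zero_mem _
  | tmul a b =>
    rcases Submodule.mem_sup.1 b.2 with ⟨s, hs, q, hq, hb⟩
    rw [TensorProduct.map_tmul]
    simp only [Submodule.coe_subtype]
    rw [← hb, TensorProduct.tmul_add]
    exact Submodule.add_mem _
      (Submodule.mem_sup_left (tmul_mem_pairTensor k H a.2 hs))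
      (Submodule.mem_sup_right (tmul_mem_pairTensor k H a.2 hq))
  | add a b ha hb => rw [map_add]; exact Submodule.add_mem _ ha hb

set_option linter.unusedSectionVars false in
lemma map_pairTensor_le {P Q P' Q' : Submodule k H} (f g : H →ₗ[k] H)
    (hf : ∀ x ∈ P, f x ∈ P') (hg : ∀ x ∈ Q, g x ∈ Q') {z : H ⊗[k] H}
    (hz : z ∈ pairTensor k H P Q) :
    (TensorProduct.map f g) z ∈ pairTensor k H P' Q' := by
  obtain ⟨t, rfl⟩ := hz
  induction t using TensorProduct.induction_on with
  | zero => simp only [map_zero]; exact Submodule.zero_mem _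
  | tmul a b =>
    rw [← LinearMap.comp_apply, ← TensorProduct.map_comp, TensorProduct.map_tmul]
    exact tmul_mem_pairTensor k H (hf _ a.2) (hg _ b.2)
  | add a b ha hb => rw [map_add, map_add]; exact Submodule.add_mem _ ha hb

/-- Let `H` be a commutative Hopf superalgebra over `k` which is
*strongly split* : there are identifications `B ≅ H̄` (a purely even subalgebra) and
`Λ ≅ ⋀W^H` (where `W^H := H₁/(H₀⁺H₁)`) inside `H` such that multiplication gives an
isomorphism `H ≅ H̄ ⊗_k ⋀W^H` of counital left `H̄`-comodule algebras (in particular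
`Δψ ≡ 1 ⊗ ψ mod J_H ⊗ H` for `ψ ∈ ⋀W^H`, and `H⁺ = H̄⁺ ⊕ H₁^{[2]} ⊕ H₁`).  Then for
every odd `φ ∈ (⋀W^H)₁` one has
`Δ(φ) = φ⊗1 + 1⊗φ + Σ φ⁺₍₁₎ ⊗ φ⁺₍₂₎`
where each pair `(φ⁺₍₁₎, φ⁺₍₂₎)` lies in
`(H₁^{[2]} × H₁) ∪ (H₁ × H̄⁺) ∪ (H₁ × H₁^{[2]})`. -/
theorem statement17 [Coalgebra k H]
    (hΔpar : ∀ (i : ZMod 2), ∀ x ∈ SuperAlgebra.grading (k := k) (A := H) i,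
      Coalgebra.comul (R := k) x ∈ tensorGrading k H i)
    (hεodd : ∀ x ∈ SuperAlgebra.grading (k := k) (A := H) 1, Coalgebra.counit (R := k) x = 0)
    (B Λ : Submodule k H)
    (hBeven : B ≤ SuperAlgebra.grading (k := k) (A := H) 0)
    -- the strong splitting : multiplication `H̄ ⊗ ⋀W^H → H` is bijective
    (hsplit : Function.Bijective
      (TensorProduct.lift ((LinearMap.mul k H).compl₁₂ B.subtype Λ.subtype)))
    -- the splitting is one of left `H̄`-comodules : `Δψ ≡ 1 ⊗ ψ  mod  J_H ⊗ H`
    (hcomod : ∀ ψ ∈ Λ, Coalgebra.comul (R := k) ψ - (1 : H) ⊗ₜ[k] ψ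
      ∈ pairTensor k H ((oddIdeal k H).restrictScalars k) (⊤ : Submodule k H))
    -- the induced decomposition `H⁺ = H̄⁺ ⊕ H₁^{[2]} ⊕ H₁` of the augmentation ideal
    (hplus : LinearMap.ker (Coalgebra.counit (R := k) (A := H))
      = (B ⊓ LinearMap.ker (Coalgebra.counit (R := k) (A := H)))
          ⊔ oddSquares k H ⊔ SuperAlgebra.grading (k := k) (A := H) 1)
    (φ : H) (hφΛ : φ ∈ Λ) (hφodd : φ ∈ SuperAlgebra.grading (k := k) (A := H) 1) :
    Coalgebra.comul (R := k) φ - φ ⊗ₜ[k] (1 : H) - (1 : H) ⊗ₜ[k] φ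
      ∈ pairTensor k H (oddSquares k H) (SuperAlgebra.grading (k := k) (A := H) 1)
        ⊔ pairTensor k H (SuperAlgebra.grading (k := k) (A := H) 1)
            (B ⊓ LinearMap.ker (Coalgebra.counit (R := k) (A := H)))
        ⊔ pairTensor k H (SuperAlgebra.grading (k := k) (A := H) 1) (oddSquares k H) := by
  classical
  set G : ZMod 2 → Submodule k H := SuperAlgebra.grading (k := k) (A := H) with hGdef
  set Q : Submodule k H := oddSquares k H with hQdef
  set M : Submodule k H := Q ⊔ G 1 with hMdef
  have h11 : (1 + 1 : ZMod 2) = 0 := by decide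
  have h01 : (0 + 1 : ZMod 2) = 1 := by decide
  -- products of two odd elements lie in `Q`
  have hQmem : ∀ {x y : H}, x ∈ G 1 → y ∈ G 1 → x * y ∈ Q := by
    intro x y hx hy
    exact Submodule.subset_span ⟨x, hx, y, hy, rfl⟩
  -- `Q` is contained in the even part
  have hQ0 : Q ≤ G 0 := by
    rw [hQdef, oddSquares]
    apply Submodule.span_le.2
    rintro a ⟨x, hx, y, hy, rfl⟩
    have h := SuperAlgebra.mul_mem hx hy
    rwa [h11] at h
  -- `M` is stable under multiplication by graded elements
  have hmul_grade : ∀ (i : ZMod 2) (h : H), h ∈ G i → ∀ y ∈ M, h * y ∈ M := by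
    intro i h hh y hy
    rcases Submodule.mem_sup.1 hy with ⟨q, hq, o, ho, rfl⟩
    rw [mul_add]
    refine Submodule.add_mem _ ?_ ?_
    · -- `h * q`
      have hle : Q ≤ Submodule.comap (LinearMap.mulLeft k h) M := by
        rw [hQdef, oddSquares]
        apply Submodule.span_le.2
        rintro a ⟨x, hx, y', hy', rfl⟩
        simp only [Set.mem_setOf_eq, SetLike.mem_coe, Submodule.mem_comap,
          LinearMap.mulLeft_apply]
        rw [← mul_assoc]
        rcases zmod2_cases i with rfl | rfl
        · have hx' : h * x ∈ G 1 := by have := SuperAlgebra.mul_mem hh hx; rwa [h01] at this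
          exact Submodule.mem_sup_left (hQmem hx' hy')
        · have hx' : h * x ∈ G 0 := by have := SuperAlgebra.mul_mem hh hx; rwa [h11] at this
          have : (h * x) * y' ∈ G 1 := by
            have := SuperAlgebra.mul_mem hx' hy'; rwa [h01] at this
          exact Submodule.mem_sup_right this
      exact Submodule.mem_comap.1 (hle hq)
    · -- `h * o`
      rcases zmod2_cases i with rfl | rfl
      · have : h * o ∈ G 1 := by have := SuperAlgebra.mul_mem hh ho; rwa [h01] at this
        exact Submodule.mem_sup_right this
      · exact Submodule.mem_sup_left (hQmem hh ho)
  have hmul : ∀ (h : H), ∀ y ∈ M, h * y ∈ M := by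
    intro h y hy
    have htop : h ∈ ⨆ i, G i := by
      rw [(SuperAlgebra.isInternal (k := k) (A := H)).submodule_iSup_eq_top]
      trivial
    exact Submodule.iSup_induction (motive := fun z => z * y ∈ M) G htop
      (fun i z hz => hmul_grade i z hz y hy)
      (by show (0 : H) * y ∈ M; rw [zero_mul]; exact Submodule.zero_mem M)
      (fun a b ha hb => by show (a + b) * y ∈ M; rw [add_mul]; exact Submodule.add_mem M ha hb)
  -- the odd ideal is contained in `M = Q ⊔ G 1`
  have hJQO : ∀ x ∈ oddIdeal k H, x ∈ M := by
    intro x hx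
    refine Submodule.span_induction (p := fun z _ => z ∈ M) ?_ ?_ ?_ ?_ hx
    · intro z hz
      exact Submodule.mem_sup_right hz
    · exact Submodule.zero_mem M
    · intro a b _ _ ha hb; exact Submodule.add_mem M ha hb
    · intro a z _ hz
      rw [smul_eq_mul]; exact hmul a z hz
  -- `M ≤ ker ε`
  have hOker : G 1 ≤ LinearMap.ker (Coalgebra.counit (R := k) (A := H)) := by
    intro x hx; exact LinearMap.mem_ker.2 (hεodd x hx)
  have hQker : Q ≤ LinearMap.ker (Coalgebra.counit (R := k) (A := H)) := by
    rw [hplus]; exact le_sup_of_le_left le_sup_right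
  have hJker : ∀ x ∈ oddIdeal k H, Coalgebra.counit (R := k) x = 0 := by
    intro x hx
    exact LinearMap.mem_ker.1 ((sup_le hQker hOker) (hJQO x hx))
  -- the scalar `1 - ε 1` kills every element of `Λ`
  have hscalΛ : ∀ ψ ∈ Λ, (1 - Coalgebra.counit (R := k) (1 : H)) • ψ = 0 := by
    intro ψ hψ
    obtain ⟨t, ht⟩ := hcomod ψ hψ
    have hcomp : ((Coalgebra.counit (R := k) (A := H)).rTensor H) ∘ₗ
        (TensorProduct.map ((oddIdeal k H).restrictScalars k).subtype
          (⊤ : Submodule k H).subtype) = 0 := by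
      apply TensorProduct.ext'
      intro a b
      simp only [LinearMap.comp_apply, TensorProduct.map_tmul, LinearMap.rTensor_tmul,
        Submodule.coe_subtype, LinearMap.zero_apply]
      rw [hJker (a : H) ((Submodule.restrictScalars_mem k _ _).1 a.2), TensorProduct.zero_tmul]
    have hz : ((Coalgebra.counit (R := k) (A := H)).rTensor H)
        (Coalgebra.comul (R := k) ψ - (1 : H) ⊗ₜ[k] ψ) = 0 := by
      rw [← ht]
      exact LinearMap.congr_fun hcomp t
    rw [map_sub, Coalgebra.rTensor_counit_comul, LinearMap.rTensor_tmul, sub_eq_zero] at hz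
    have := congrArg (TensorProduct.lid k H) hz
    simp only [TensorProduct.lid_tmul, one_smul] at this
    rw [sub_smul, one_smul, ← this, sub_self]
  -- hence it kills every element of `H`
  have hscal : ∀ x : H, (1 - Coalgebra.counit (R := k) (1 : H)) • x = 0 := by
    intro x
    obtain ⟨t, rfl⟩ := hsplit.2 x
    induction t using TensorProduct.induction_on with
    | zero => simp
    | tmul b l =>
      have h0 : (1 - Coalgebra.counit (R := k) (1 : H)) • (l : H) = 0 := hscalΛ _ l.2
      rw [TensorProduct.lift.tmul, LinearMap.compl₁₂_apply, LinearMap.mul_apply']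
      simp only [Submodule.coe_subtype]
      rw [← mul_smul_comm, h0, mul_zero]
    | add a b ha hb => rw [map_add, smul_add, ha, hb, add_zero]
  have hεx : ∀ x : H, (1 - Coalgebra.counit (R := k) (1 : H)) * Coalgebra.counit (R := k) x = 0 := by
    intro x
    have := congrArg (Coalgebra.counit (R := k) (A := H)) (hscal x)
    simpa [smul_eq_mul] using this
  -- the "augmentation corrector" π
  set π : H →ₗ[k] H := LinearMap.id -
    (Algebra.linearMap k H) ∘ₗ (Coalgebra.counit (R := k) (A := H)) with hπdef
  have hπapp : ∀ x : H, π x = x - (Coalgebra.counit (R := k) x) • 1 := by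
    intro x
    simp [hπdef, Algebra.linearMap_apply, Algebra.algebraMap_eq_smul_one]
  have hπmem : ∀ x : H, π x ∈ LinearMap.ker (Coalgebra.counit (R := k) (A := H)) := by
    intro x
    rw [LinearMap.mem_ker, hπapp, map_sub, map_smul, smul_eq_mul]
    linear_combination hεx x
  have hπodd : ∀ x ∈ G 1, π x = x := by
    intro x hx
    rw [hπapp, hεodd x hx, zero_smul, sub_zero]
  -- the two parity projections
  have hone : (1 : H) ∈ G 0 := SuperAlgebra.one_mem
  -- `E := map p₀ p₁ + map p₁ p₀` acts as the identity on `tensorGrading 1`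
  have hE : ∀ z ∈ tensorGrading k H 1,
      (TensorProduct.map (sproj (R := k) (A := H) 0) (sproj (R := k) (A := H) 1)) z
        + (TensorProduct.map (sproj (R := k) (A := H) 1) (sproj (R := k) (A := H) 0)) z = z := by
    intro z hz
    have hle : tensorGrading k H 1 ≤ LinearMap.ker
        ((TensorProduct.map (sproj (R := k) (A := H) 0) (sproj (R := k) (A := H) 1)
          + TensorProduct.map (sproj (R := k) (A := H) 1) (sproj (R := k) (A := H) 0))
          - LinearMap.id) := by
      unfold tensorGrading pairTensor
      refine iSup_le ?_
      intro j
      rw [LinearMap.range_le_ker_iff]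
      apply TensorProduct.ext'
      intro a b
      have ha := a.2
      have hb := b.2
      simp only [LinearMap.comp_apply, TensorProduct.map_tmul, LinearMap.sub_apply,
        LinearMap.add_apply, LinearMap.id_apply, LinearMap.zero_apply, Submodule.coe_subtype]
      have hcast : ∀ (i i' : ZMod 2), i = i' → ∀ x : H, x ∈ G i → x ∈ G i' :=
        fun i i' hii' x hx => hii' ▸ hx
      rcases zmod2_cases j with rfl | rfl
      · have hb1 : (b : H) ∈ G 1 := hcast _ _ (by decide) _ hb
        rw [sproj_of_mem ha, sproj_of_mem hb1, sproj_of_mem_ne (by decide) ha,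
          sproj_of_mem_ne (by decide) hb1]
        simp
      · have hb0 : (b : H) ∈ G 0 := hcast _ _ (by decide) _ hb
        rw [sproj_of_mem ha, sproj_of_mem hb0, sproj_of_mem_ne (by decide) ha,
          sproj_of_mem_ne (by decide) hb0]
        simp
    have h := hle hz
    rw [LinearMap.mem_ker, LinearMap.sub_apply, LinearMap.add_apply, LinearMap.id_apply,
      sub_eq_zero] at h
    exact h
  -- `w = (1 ⊗ π) (Δφ - 1 ⊗ φ)`
  have hu1 : (Algebra.linearMap k H) (1 : k) = 1 := by simp
  have hlT : (LinearMap.lTensor H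
        ((Algebra.linearMap k H) ∘ₗ (Coalgebra.counit (R := k) (A := H))))
      (Coalgebra.comul (R := k) φ) = φ ⊗ₜ[k] (1 : H) := by
    rw [LinearMap.lTensor_comp, LinearMap.comp_apply, Coalgebra.lTensor_counit_comul,
      LinearMap.lTensor_tmul, hu1]
  have hwr : (LinearMap.lTensor H π) (Coalgebra.comul (R := k) φ - (1 : H) ⊗ₜ[k] φ)
      = Coalgebra.comul (R := k) φ - φ ⊗ₜ[k] (1 : H) - (1 : H) ⊗ₜ[k] φ := by
    rw [map_sub, hπdef, LinearMap.lTensor_sub, LinearMap.lTensor_id]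
    simp only [LinearMap.sub_apply, LinearMap.id_apply]
    rw [hlT, LinearMap.lTensor_tmul, LinearMap.comp_apply, hεodd φ hφodd, map_zero,
      TensorProduct.tmul_zero, sub_zero]
  -- Piece A : `(p₀ ⊗ p₁) w ∈ Q ⊗ O`
  have hA : (TensorProduct.map (sproj (R := k) (A := H) 0) (sproj (R := k) (A := H) 1))
      (Coalgebra.comul (R := k) φ - φ ⊗ₜ[k] (1 : H) - (1 : H) ⊗ₜ[k] φ)
      ∈ pairTensor k H Q (G 1) := by
    have h1 : (TensorProduct.map (sproj (R := k) (A := H) 0) (sproj (R := k) (A := H) 1))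
        (φ ⊗ₜ[k] (1 : H)) = 0 := by
      rw [TensorProduct.map_tmul, sproj_of_mem_ne (by decide) hφodd, TensorProduct.zero_tmul]
    rw [sub_right_comm, map_sub, h1, sub_zero]
    refine map_pairTensor_le k H _ _ ?_ ?_ (hcomod φ hφΛ)
    · intro x hx
      rcases Submodule.mem_sup.1
        (hJQO x ((Submodule.restrictScalars_mem k _ _).1 hx)) with ⟨q, hq, o, ho, heq⟩
      rw [← heq, map_add, sproj_of_mem (hQ0 hq), sproj_of_mem_ne (by decide) ho, add_zero]
      exact hq
    · intro x _
      exact sproj_mem 1 x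
  -- Piece B : `(p₁ ⊗ p₀) w ∈ O ⊗ (H̄⁺ ⊔ Q)`
  have hB : (TensorProduct.map (sproj (R := k) (A := H) 1) (sproj (R := k) (A := H) 0))
      (Coalgebra.comul (R := k) φ - φ ⊗ₜ[k] (1 : H) - (1 : H) ⊗ₜ[k] φ)
      ∈ pairTensor k H (G 1) (B ⊓ LinearMap.ker (Coalgebra.counit (R := k) (A := H)))
        ⊔ pairTensor k H (G 1) Q := by
    rw [← hwr, ← LinearMap.comp_apply, LinearMap.map_comp_lTensor]
    refine pairTensor_sup_right k H (G 1)
      (B ⊓ LinearMap.ker (Coalgebra.counit (R := k) (A := H))) Q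
      (map_pairTensor_le k H _ _ ?_ ?_ (hcomod φ hφΛ))
    · intro x _
      exact sproj_mem 1 x
    · intro x _
      have hk : π x ∈ (B ⊓ LinearMap.ker (Coalgebra.counit (R := k) (A := H))) ⊔ Q ⊔ G 1 := by
        rw [← hplus]; exact hπmem x
      rcases Submodule.mem_sup.1 hk with ⟨m, hm, o, ho, heq⟩
      have hm0 : m ∈ G 0 := (sup_le (le_trans inf_le_left hBeven) hQ0) hm
      rw [LinearMap.comp_apply, ← heq, map_add, sproj_of_mem hm0,
        sproj_of_mem_ne (by decide) ho, add_zero]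
      exact hm
  -- assembling the two pieces
  have hEw : (TensorProduct.map (sproj (R := k) (A := H) 0) (sproj (R := k) (A := H) 1))
        (Coalgebra.comul (R := k) φ - φ ⊗ₜ[k] (1 : H) - (1 : H) ⊗ₜ[k] φ)
      + (TensorProduct.map (sproj (R := k) (A := H) 1) (sproj (R := k) (A := H) 0))
        (Coalgebra.comul (R := k) φ - φ ⊗ₜ[k] (1 : H) - (1 : H) ⊗ₜ[k] φ)
      = Coalgebra.comul (R := k) φ - φ ⊗ₜ[k] (1 : H) - (1 : H) ⊗ₜ[k] φ := by
    have hsum := hE _ (hΔpar 1 φ hφodd)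
    have e1 : (TensorProduct.map (sproj (R := k) (A := H) 0) (sproj (R := k) (A := H) 1))
        (φ ⊗ₜ[k] (1 : H)) = 0 := by
      rw [TensorProduct.map_tmul, sproj_of_mem_ne (by decide) hφodd, TensorProduct.zero_tmul]
    have e2 : (TensorProduct.map (sproj (R := k) (A := H) 0) (sproj (R := k) (A := H) 1))
        ((1 : H) ⊗ₜ[k] φ) = (1 : H) ⊗ₜ[k] φ := by
      rw [TensorProduct.map_tmul, sproj_of_mem hone, sproj_of_mem hφodd]
    have e3 : (TensorProduct.map (sproj (R := k) (A := H) 1) (sproj (R := k) (A := H) 0))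
        (φ ⊗ₜ[k] (1 : H)) = φ ⊗ₜ[k] (1 : H) := by
      rw [TensorProduct.map_tmul, sproj_of_mem hφodd, sproj_of_mem hone]
    have e4 : (TensorProduct.map (sproj (R := k) (A := H) 1) (sproj (R := k) (A := H) 0))
        ((1 : H) ⊗ₜ[k] φ) = 0 := by
      rw [TensorProduct.map_tmul, sproj_of_mem_ne (by decide) hone, TensorProduct.zero_tmul]
    simp only [map_sub, e1, e2, e3, e4]
    rw [sub_zero, sub_zero]
    conv_rhs => rw [← hsum]
    abel
  have hle2 : pairTensor k H (G 1) (B ⊓ LinearMap.ker (Coalgebra.counit (R := k) (A := H)))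
        ⊔ pairTensor k H (G 1) Q
      ≤ pairTensor k H Q (G 1)
        ⊔ pairTensor k H (G 1) (B ⊓ LinearMap.ker (Coalgebra.counit (R := k) (A := H)))
        ⊔ pairTensor k H (G 1) Q :=
    sup_le (le_sup_of_le_left le_sup_right) le_sup_right
  rw [← hEw]
  exact Submodule.add_mem _ (Submodule.mem_sup_left (Submodule.mem_sup_left hA)) (hle2 hB)
end
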